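/- arXiv:2204.05150 — 2 statements merged into one kernel-verified Lean document; each statement's English description precedes it below -/
import Mathlib

section
/- Let H be a nonzero complex Hilbert space and let A be a bounded linear operator on H. Then for every α with 0 ≤ α ≤ 1, ‖α·(Re(A))² + (1 − α)·(Im(A))²‖ ≤ w(A)². -/
open scoped InnerProductSpace
open ContinuousLinearMap

variable {H : Type*} [NormedAddCommGroup H] [InnerProductSpace ℂ H]
  [CompleteSpace H] [Nontrivial H]

/-- The numerical radius of a bounded linear operator. -/
noncomputable def numRad (A : H →L[ℂ] H) : ℝ :=
  ⨆ x : {x : H // ‖x‖ = 1}, ‖⟪A x.1, x.1⟫_ℂ‖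

/-- The Crawford number of a bounded linear operator. -/
noncomputable def crawford (A : H →L[ℂ] H) : ℝ :=
  ⨅ x : {x : H // ‖x‖ = 1}, ‖⟪A x.1, x.1⟫_ℂ‖

/-- The Euclidean operator radius of a pair of bounded linear operators. -/
noncomputable def euclRad (B C : H →L[ℂ] H) : ℝ :=
  ⨆ x : {x : H // ‖x‖ = 1}, Real.sqrt (‖⟪B x.1, x.1⟫_ℂ‖ ^ 2 + ‖⟪C x.1, x.1⟫_ℂ‖ ^ 2)

/-- The absolute value `|A| = (A*A)^(1/2)` of a bounded linear operator. -/
noncomputable def opAbs (A : H →L[ℂ] H) : H →L[ℂ] H := CFC.sqrt (adjoint A * A)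

/-- The real part `Re(A) = (A + A*)/2` of a bounded linear operator. -/
noncomputable def reOp (A : H →L[ℂ] H) : H →L[ℂ] H := (2 : ℂ)⁻¹ • (A + adjoint A)

/-- The imaginary part `Im(A) = (A - A*)/(2i)` of a bounded linear operator. -/
noncomputable def imOp (A : H →L[ℂ] H) : H →L[ℂ] H := (2 * Complex.I)⁻¹ • (A - adjoint A)

/-! For every vector `x`, `⟨Re(A) x, x⟩ = Re ⟨A x, x⟩` and `⟨Im(A) x, x⟩ = Im ⟨A x, x⟩`. The norm of a
self-adjoint operator is its numerical radius, so `‖Re(A)‖, ‖Im(A)‖ ≤ w(A)`. Hence `Re(A)²` and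
`Im(A)²` lie in the closed ball of radius `w(A)²`, and so does any convex combination of them. -/

theorem IsSelfAdjoint.norm_le_of_abs_re_inner_le {𝕜 E : Type*} [RCLike 𝕜]
    [NormedAddCommGroup E] [InnerProductSpace 𝕜 E] [CompleteSpace E] {S : E →L[𝕜] E}
    (hS : IsSelfAdjoint S) {M : ℝ} (hM : 0 ≤ M)
    (h : ∀ x, |RCLike.re (inner 𝕜 (S x) x)| ≤ M * ‖x‖ ^ 2) : ‖S‖ ≤ M := by
  rw [S.norm_eq_iSup_rayleighQuotient hS.isSymmetric]
  refine ciSup_le fun x => ?_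
  rcases eq_or_ne x 0 with rfl | hx
  · simpa using hM
  · rw [rayleighQuotient, reApplyInnerSelf_apply, abs_div, abs_sq, div_le_iff₀ (by positivity)]
    exact h x

section NumericalRadius

omit [CompleteSpace H] [Nontrivial H]

theorem bddAbove_range_norm_inner_self (A : H →L[ℂ] H) :
    BddAbove (Set.range fun x : {x : H // ‖x‖ = 1} => ‖⟪A x.1, x.1⟫_ℂ‖) := by
  refine ⟨‖A‖, ?_⟩
  rintro _ ⟨⟨x, hx⟩, rfl⟩
  calc ‖⟪A x, x⟫_ℂ‖ ≤ ‖A x‖ * ‖x‖ := norm_inner_le_norm _ _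
    _ ≤ ‖A‖ * ‖x‖ * ‖x‖ := by gcongr; exact le_opNorm A x
    _ = ‖A‖ := by rw [hx, mul_one, mul_one]

theorem numRad_nonneg (A : H →L[ℂ] H) : 0 ≤ numRad A :=
  Real.iSup_nonneg fun _ => norm_nonneg _

theorem norm_inner_self_le_numRad (A : H →L[ℂ] H) {x : H} (hx : ‖x‖ = 1) :
    ‖⟪A x, x⟫_ℂ‖ ≤ numRad A :=
  le_ciSup (bddAbove_range_norm_inner_self A) (⟨x, hx⟩ : {x : H // ‖x‖ = 1})

theorem norm_inner_self_le_numRad_mul (A : H →L[ℂ] H) (x : H) :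
    ‖⟪A x, x⟫_ℂ‖ ≤ numRad A * ‖x‖ ^ 2 := by
  rcases eq_or_ne x 0 with rfl | hx
  · simp
  have hx' : 0 < ‖x‖ := norm_pos_iff.2 hx
  have hunit : ‖(‖x‖⁻¹ : ℂ) • x‖ = 1 := by
    rw [norm_smul, norm_inv, Complex.norm_real, norm_norm, inv_mul_cancel₀ hx'.ne']
  have hscale : ⟪A ((‖x‖⁻¹ : ℂ) • x), (‖x‖⁻¹ : ℂ) • x⟫_ℂ = (‖x‖ ^ 2)⁻¹ • ⟪A x, x⟫_ℂ := by
    rw [map_smul, inner_smul_left, inner_smul_right, map_inv₀, Complex.conj_ofReal, ← mul_assoc,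
      Complex.real_smul]
    push_cast
    ring
  have := norm_inner_self_le_numRad A hunit
  rwa [hscale, norm_smul, Real.norm_of_nonneg (by positivity), inv_mul_le_iff₀ (by positivity),
    mul_comm] at this

end NumericalRadius

section RealImaginaryParts

open scoped ComplexStarModule

omit [Nontrivial H]

theorem reOp_eq_realPart (A : H →L[ℂ] H) : reOp A = ℜ A := by
  rw [realPart_apply_coe, reOp, star_eq_adjoint, ← Complex.coe_smul]
  norm_num

theorem imOp_eq_imaginaryPart (A : H →L[ℂ] H) : imOp A = ℑ A := by
  rw [imaginaryPart_apply_coe, imOp, star_eq_adjoint, ← Complex.coe_smul, smul_smul]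
  congr 1
  field_simp
  norm_num [Complex.ext_iff]

theorem inner_adjoint_self_eq_conj (A : H →L[ℂ] H) (x : H) :
    ⟪adjoint A x, x⟫_ℂ = starRingEnd ℂ ⟪A x, x⟫_ℂ := by
  rw [adjoint_inner_left, inner_conj_symm]

theorem re_inner_reOp (A : H →L[ℂ] H) (x : H) : (⟪reOp A x, x⟫_ℂ).re = (⟪A x, x⟫_ℂ).re := by
  simp only [reOp, smul_apply, add_apply, inner_smul_left, inner_add_left,
    inner_adjoint_self_eq_conj, Complex.add_conj]
  simp

-- The sign comes from the inner product being conjugate-linear in its first argument.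
theorem re_inner_imOp (A : H →L[ℂ] H) (x : H) : (⟪imOp A x, x⟫_ℂ).re = -(⟪A x, x⟫_ℂ).im := by
  simp only [imOp, smul_apply, sub_apply, inner_smul_left, inner_sub_left,
    inner_adjoint_self_eq_conj, Complex.sub_conj]
  simp

theorem norm_reOp_le_numRad (A : H →L[ℂ] H) : ‖reOp A‖ ≤ numRad A := by
  refine (reOp_eq_realPart A ▸ (ℜ A).2 : IsSelfAdjoint (reOp A)).norm_le_of_abs_re_inner_le
    (numRad_nonneg A) fun x => ?_
  rw [RCLike.re_to_complex, re_inner_reOp]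
  exact (Complex.abs_re_le_norm _).trans (norm_inner_self_le_numRad_mul A x)

theorem norm_imOp_le_numRad (A : H →L[ℂ] H) : ‖imOp A‖ ≤ numRad A := by
  refine (imOp_eq_imaginaryPart A ▸ (ℑ A).2 : IsSelfAdjoint (imOp A)).norm_le_of_abs_re_inner_le
    (numRad_nonneg A) fun x => ?_
  rw [RCLike.re_to_complex, re_inner_imOp, abs_neg]
  exact (Complex.abs_im_le_norm _).trans (norm_inner_self_le_numRad_mul A x)

end RealImaginaryParts

theorem norm_sq_le_sq_of_norm_le {R : Type*} [SeminormedRing R] {a : R} {r : ℝ} (h : ‖a‖ ≤ r) :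
    ‖a ^ 2‖ ≤ r ^ 2 :=
  (norm_pow_le' a two_pos).trans (pow_le_pow_left₀ (norm_nonneg a) h 2)

theorem stmt13 (A : H →L[ℂ] H) (α : ℝ) (h0 : 0 ≤ α) (h1 : α ≤ 1) :
    ‖α • (reOp A) ^ 2 + (1 - α) • (imOp A) ^ 2‖ ≤ (numRad A) ^ 2 := by
  have hRe : reOp A ^ 2 ∈ Metric.closedBall 0 (numRad A ^ 2) := by
    simpa using norm_sq_le_sq_of_norm_le (norm_reOp_le_numRad A)
  have hIm : imOp A ^ 2 ∈ Metric.closedBall 0 (numRad A ^ 2) := by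
    simpa using norm_sq_le_sq_of_norm_le (norm_imOp_le_numRad A)
  simpa using convex_closedBall _ _ hRe hIm h0 (sub_nonneg.2 h1) (add_sub_cancel α 1)
end

section
/- Let H be a nonzero complex Hilbert space and let B, C be bounded linear operators on H. Then for every α with 0 ≤ α ≤ 1, w_e(B, C)² ≤ w(√α·B + √(1 − α)·C)² + w(√(1 − α)·B − √α·C)². -/
open scoped InnerProductSpace
open ContinuousLinearMap

variable {H : Type*} [NormedAddCommGroup H] [InnerProductSpace ℂ H]
  [CompleteSpace H] [Nontrivial H]

/-! The identity `|b|² + |c|² = |s b + t c|² + |t b - s c|²` for `s² + t² = 1` says that a rotation of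
`ℂ²` preserves the Euclidean norm; applied to `b = ⟪B x, x⟫`, `c = ⟪C x, x⟫`, the two rotated
entries are the quadratic forms of the two rotated operators, each bounded by its numerical radius. -/

theorem norm_smul_add_smul_sq_add_norm_smul_sub_smul_sq {F : Type*} [NormedAddCommGroup F]
    [InnerProductSpace ℝ F] (s t : ℝ) (b c : F) :
    ‖s • b + t • c‖ ^ 2 + ‖t • b - s • c‖ ^ 2 = (s ^ 2 + t ^ 2) * (‖b‖ ^ 2 + ‖c‖ ^ 2) := by
  simp only [norm_add_sq_real, norm_sub_sq_real, norm_smul, real_inner_smul_left,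
    real_inner_smul_right, mul_pow, Real.norm_eq_abs, sq_abs]
  ring

section

variable {E : Type*} [NormedAddCommGroup E] [InnerProductSpace ℂ E]

theorem inner_real_smul_left (r : ℝ) (x y : E) : ⟪r • x, y⟫_ℂ = r • ⟪x, y⟫_ℂ := by
  rw [RCLike.real_smul_eq_coe_smul (K := ℂ), inner_smul_real_left]

theorem bddAbove_range_norm_inner_apply_self (A : E →L[ℂ] E) :
    BddAbove (Set.range fun x : {x : E // ‖x‖ = 1} => ‖⟪A x.1, x.1⟫_ℂ‖) := by
  refine ⟨‖A‖, ?_⟩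
  rintro _ ⟨x, rfl⟩
  calc ‖⟪A x.1, x.1⟫_ℂ‖ ≤ ‖A x.1‖ * ‖x.1‖ := norm_inner_le_norm _ _
    _ ≤ ‖A‖ * ‖x.1‖ * ‖x.1‖ := by gcongr; exact A.le_opNorm _
    _ = ‖A‖ := by rw [x.2]; ring

theorem norm_inner_apply_self_le_numRad (A : E →L[ℂ] E) (x : {x : E // ‖x‖ = 1}) :
    ‖⟪A x.1, x.1⟫_ℂ‖ ≤ numRad A :=
  le_ciSup (bddAbove_range_norm_inner_apply_self A) x

theorem euclRad_sq_le_of_forall_le [Nontrivial E] (B C : E →L[ℂ] E) {M : ℝ}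
    (hM : ∀ x : {x : E // ‖x‖ = 1}, ‖⟪B x.1, x.1⟫_ℂ‖ ^ 2 + ‖⟪C x.1, x.1⟫_ℂ‖ ^ 2 ≤ M) :
    euclRad B C ^ 2 ≤ M := by
  obtain ⟨y, hy⟩ := exists_ne (0 : E)
  have hM₀ : 0 ≤ M := (by positivity : (0 : ℝ) ≤ _).trans (hM ⟨‖y‖⁻¹ • y, norm_smul_inv_norm hy⟩)
  have hle : euclRad B C ≤ √M :=
    Real.iSup_le (fun x => Real.sqrt_le_sqrt (hM x)) (Real.sqrt_nonneg M)
  calc euclRad B C ^ 2 ≤ √M ^ 2 := by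
        gcongr
        exact Real.iSup_nonneg fun _ => Real.sqrt_nonneg _
    _ = M := Real.sq_sqrt hM₀

end

theorem stmt14 (B C : H →L[ℂ] H) (α : ℝ) (h0 : 0 ≤ α) (h1 : α ≤ 1) :
    (euclRad B C) ^ 2 ≤
      (numRad (Real.sqrt α • B + Real.sqrt (1 - α) • C)) ^ 2
        + (numRad (Real.sqrt (1 - α) • B - Real.sqrt α • C)) ^ 2 := by
  set s := Real.sqrt α
  set t := Real.sqrt (1 - α)
  have hst : s ^ 2 + t ^ 2 = 1 := by
    rw [Real.sq_sqrt h0, Real.sq_sqrt (sub_nonneg.mpr h1)]; ring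
  refine euclRad_sq_le_of_forall_le B C fun x => ?_
  have hu := norm_inner_apply_self_le_numRad (s • B + t • C) x
  have hv := norm_inner_apply_self_le_numRad (t • B - s • C) x
  simp only [add_apply, sub_apply, smul_apply, inner_add_left, inner_sub_left,
    inner_real_smul_left] at hu hv
  calc ‖⟪B x.1, x.1⟫_ℂ‖ ^ 2 + ‖⟪C x.1, x.1⟫_ℂ‖ ^ 2
      = ‖s • ⟪B x.1, x.1⟫_ℂ + t • ⟪C x.1, x.1⟫_ℂ‖ ^ 2
        + ‖t • ⟪B x.1, x.1⟫_ℂ - s • ⟪C x.1, x.1⟫_ℂ‖ ^ 2 := by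
        rw [norm_smul_add_smul_sq_add_norm_smul_sub_smul_sq, hst, one_mul]
    _ ≤ _ := by gcongr
end
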